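/- arXiv:1907.12149 — 2 statements merged into one kernel-verified Lean document; each statement's English description precedes it below -/
import Mathlib

section
/- Let G_1, …, G_k be finite simple graphs on a common vertex set V and r_1, …, r_k ∈ ℕ positive. Then there exists a linear ordering σ* of V such that for all i, scol_{r_i}(G_i, σ*) ≤ (k+1)·(wcol_{2r_i}(G_i))² ≤ (k+1)·(scol_{2r_i}(G_i))^{4r_i}. -/
/-!
Fix for each `i` an ordering `σᵢ` attaining `wcol_{2rᵢ}(Gᵢ) =: cᵢ`; every vertex weakly
`rᵢ`-reaches at most `cᵢ` vertices in `σᵢ`. If `y` is strongly `rᵢ`-reachable from `x` in an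
ordering `τ`, the `σᵢ`-minimum `μ` of the connecting path is weakly reachable from both `x` and
`y`, and `y ≤_τ μ`. Hence `scol_{rᵢ}(Gᵢ, τ) ≤ cᵢ · d`, where `d` bounds, for every `μ`, the
number of `y ≤_τ μ` weakly reaching `μ`. By Markov's inequality and a union bound over the `k`
graphs, every nonempty vertex set contains a vertex weakly reached from at most `(k + 1) cᵢ` of
its members, simultaneously for all `i`; peeling such vertices off from the top gives `τ` with
`d = (k + 1) cᵢ`.

The second inequality is `wcol_s ≤ scol_s ^ s`: cutting a weakly reaching path at its first
vertex below its start shows `WReach_s[x] ⊆ ⋃_{z ∈ SReach_s[x]} WReach_{s-1}[z]`.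
-/

open SimpleGraph

/-- `y` is weakly `r`-reachable from `x` w.r.t. the ordering `le`:
`y ≤ x` and there is an `x,y`-path of length at most `r` all of whose
vertices `z` satisfy `y ≤ z`. -/
def wreach {V : Type*} (G : SimpleGraph V) (le : V → V → Prop) (r : ℕ) (x : V) : Set V :=
  {y | le y x ∧ ∃ p : G.Walk x y, p.IsPath ∧ p.length ≤ r ∧ ∀ z ∈ p.support, le y z}

/-- `y` is strongly `r`-reachable from `x` w.r.t. the ordering `le`:
`y ≤ x` and there is an `x,y`-path of length at most `r` all of whose
vertices `z ≠ y` satisfy `x ≤ z`. -/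
def sreach {V : Type*} (G : SimpleGraph V) (le : V → V → Prop) (r : ℕ) (x : V) : Set V :=
  {y | le y x ∧ ∃ p : G.Walk x y, p.IsPath ∧ p.length ≤ r ∧ ∀ z ∈ p.support, z ≠ y → le x z}

/-- `wcol_r(G, σ)`. -/
noncomputable def wcolOn {V : Type*} [Fintype V] (G : SimpleGraph V)
    (le : V → V → Prop) (r : ℕ) : ℕ :=
  Finset.univ.sup fun x => Nat.card (wreach G le r x)

/-- `scol_r(G, σ)`. -/
noncomputable def scolOn {V : Type*} [Fintype V] (G : SimpleGraph V)
    (le : V → V → Prop) (r : ℕ) : ℕ :=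
  Finset.univ.sup fun x => Nat.card (sreach G le r x)

/-- The weak `r`-coloring number. -/
noncomputable def wcol {V : Type*} [Fintype V] (G : SimpleGraph V) (r : ℕ) : ℕ :=
  ⨅ σ : LinearOrder V, wcolOn G σ.le r

/-- The strong `r`-coloring number. -/
noncomputable def scol {V : Type*} [Fintype V] (G : SimpleGraph V) (r : ℕ) : ℕ :=
  ⨅ σ : LinearOrder V, scolOn G σ.le r

/-- `col(G, σ)`: one more than the max back-degree. -/
noncomputable def colOn {V : Type*} [Fintype V] (G : SimpleGraph V)
    (lt : V → V → Prop) : ℕ :=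
  Finset.univ.sup fun x => 1 + Nat.card {y | G.Adj x y ∧ lt y x}

/-- The coloring number `col(G)`. -/
noncomputable def col {V : Type*} [Fintype V] (G : SimpleGraph V) : ℕ :=
  ⨅ σ : LinearOrder V, colOn G σ.lt

namespace SimpleGraph.Walk

variable {V : Type*} [DecidableEq V] {G : SimpleGraph V}

lemma exists_mem_support_forall_takeUntil_not {u v : V} (p : G.Walk u v) {P : V → Prop}
    (h : ∃ z ∈ p.support, P z) :
    ∃ z, ∃ hz : z ∈ p.support, P z ∧ ∀ w ∈ (p.takeUntil z hz).support, w ≠ z → ¬ P w := by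
  induction p with
  | nil =>
    obtain ⟨z, hz, hPz⟩ := h
    rw [mem_support_nil_iff] at hz
    subst hz
    exact ⟨_, start_mem_support _, hPz, by simp⟩
  | @cons u u' v hadj q ih =>
    by_cases hPu : P u
    · exact ⟨u, start_mem_support _, hPu, by simp⟩
    obtain ⟨z, hzq, hPz, hfirst⟩ := ih (by simpa [hPu] using h)
    have hzu : u ≠ z := fun huz => hPu (huz ▸ hPz)
    refine ⟨z, List.mem_cons_of_mem _ hzq, hPz, ?_⟩
    rw [takeUntil_cons hzq hzu hadj, support_cons]
    rintro w (_ | ⟨_, hw⟩) hwz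
    · exact hPu
    · exact hfirst w hw hwz

end SimpleGraph.Walk

section Reach

variable {V : Type*} {G : SimpleGraph V} {r : ℕ} {x y : V}

lemma mem_wreach_of_isPath {le : V → V → Prop} (p : G.Walk x y) (hp : p.IsPath)
    (hl : p.length ≤ r) (hle : ∀ z ∈ p.support, le y z) : y ∈ wreach G le r x :=
  ⟨hle x p.start_mem_support, p, hp, hl, hle⟩

lemma self_mem_wreach {le : V → V → Prop} (h : le x x) : x ∈ wreach G le r x :=
  mem_wreach_of_isPath .nil .nil (Nat.zero_le r) (by simpa using h)

lemma wreach_mono {le : V → V → Prop} {r' : ℕ} (h : r ≤ r') :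
    wreach G le r x ⊆ wreach G le r' x := by
  rintro y ⟨hyx, p, hp, hl, hle⟩
  exact ⟨hyx, p, hp, hl.trans h, hle⟩

lemma sreach_mono {le : V → V → Prop} {r' : ℕ} (h : r ≤ r') :
    sreach G le r x ⊆ sreach G le r' x := by
  rintro y ⟨hyx, p, hp, hl, hle⟩
  exact ⟨hyx, p, hp, hl.trans h, hle⟩

lemma wreach_zero {le : V → V → Prop} : wreach G le 0 x ⊆ {x} := by
  rintro y ⟨-, p, -, hl, -⟩
  exact (Walk.eq_of_length_eq_zero (Nat.le_zero.mp hl)).symm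

/-- Cut a weakly reaching path at its first vertex below `x`. -/
lemma wreach_subset_biUnion_sreach (σ : LinearOrder V) :
    wreach G σ.le r x ⊆ ⋃ z ∈ sreach G σ.le r x, wreach G σ.le (r - 1) z := by
  classical
  rintro y ⟨hyx, p, hp, hl, hle⟩
  by_cases habove : ∀ z ∈ p.support, σ.le x z
  · exact Set.mem_biUnion ⟨hyx, p, hp, hl, fun z hz _ => habove z hz⟩
      (self_mem_wreach (σ.le_refl y))
  obtain ⟨z, hz, hzx, hfirst⟩ := p.exists_mem_support_forall_takeUntil_not
    (P := fun z => ¬ σ.le x z) (by simpa only [not_forall, exists_prop] using habove)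
  have hzx' : z ≠ x := fun h => hzx (h ▸ σ.le_refl x)
  refine Set.mem_biUnion (x := z) ⟨(σ.le_total x z).resolve_left hzx, p.takeUntil z hz,
    hp.takeUntil hz, (p.length_takeUntil_le_length hz).trans hl,
    fun w hw hwz => not_not.mp (hfirst w hw hwz)⟩ ?_
  refine mem_wreach_of_isPath (p.dropUntil z hz) (hp.dropUntil hz) ?_
    fun w hw => hle w (p.support_dropUntil_subset_support hz hw)
  have := p.length_dropUntil_lt_length hz hzx'
  omega

/-- Route a strongly reaching path through its `σ`-minimum `μ`. -/
lemma sreach_subset_biUnion_wreach (σ τ : LinearOrder V) :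
    sreach G τ.le r x ⊆ ⋃ μ ∈ wreach G σ.le r x, {y | τ.le y μ ∧ μ ∈ wreach G σ.le r y} := by
  classical
  rintro y ⟨hyx, p, hp, hl, hstrong⟩
  obtain ⟨μ, hμ, hμmin⟩ : ∃ μ ∈ p.support, ∀ z ∈ p.support, σ.le μ z := by
    let _ := σ
    simpa using p.support.toFinset.exists_min_image id ⟨x, by simp⟩
  refine Set.mem_biUnion (x := μ) ?_ ⟨?_, ?_⟩
  · exact mem_wreach_of_isPath (p.takeUntil μ hμ) (hp.takeUntil hμ)
      ((p.length_takeUntil_le_length hμ).trans hl)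
      fun z hz => hμmin z (p.support_takeUntil_subset_support hμ hz)
  · by_cases hμy : μ = y
    · exact hμy ▸ τ.le_refl y
    · exact τ.le_trans _ _ _ hyx (hstrong μ hμ hμy)
  · refine mem_wreach_of_isPath (p.dropUntil μ hμ).reverse (hp.dropUntil hμ).reverse ?_ ?_
    · exact (Walk.length_reverse _).trans_le ((p.length_dropUntil_le_length hμ).trans hl)
    · intro z hz
      rw [Walk.support_reverse, List.mem_reverse] at hz
      exact hμmin z (p.support_dropUntil_subset_support hμ hz)

end Reach

lemma Set.ncard_biUnion_le_mul {α ι : Type*} {S : Set ι} (hS : S.Finite) {s : ι → Set α} {n : ℕ}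
    (h : ∀ i ∈ S, (s i).ncard ≤ n) : (⋃ i ∈ S, s i).ncard ≤ S.ncard * n := by
  calc (⋃ i ∈ S, s i).ncard = (⋃ i ∈ hS.toFinset, s i).ncard := by simp
    _ ≤ ∑ i ∈ hS.toFinset, (s i).ncard := Finset.set_ncard_biUnion_le _ _
    _ ≤ hS.toFinset.card * n := Finset.sum_le_card_nsmul _ _ _ (by simpa using h)
    _ = S.ncard * n := by rw [Set.ncard_eq_toFinset_card S hS]

section ColoringNumbers

variable {V : Type*} [Fintype V] {G : SimpleGraph V} {le : V → V → Prop} {r : ℕ}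

lemma ncard_wreach_le_wcolOn (x : V) : (wreach G le r x).ncard ≤ wcolOn G le r := by
  rw [← Nat.card_coe_set_eq]
  exact Finset.le_sup (f := fun x => Nat.card (wreach G le r x)) (Finset.mem_univ x)

lemma ncard_sreach_le_scolOn (x : V) : (sreach G le r x).ncard ≤ scolOn G le r := by
  rw [← Nat.card_coe_set_eq]
  exact Finset.le_sup (f := fun x => Nat.card (sreach G le r x)) (Finset.mem_univ x)

lemma wcolOn_le {n : ℕ} (h : ∀ x, (wreach G le r x).ncard ≤ n) : wcolOn G le r ≤ n :=
  Finset.sup_le fun x _ => (Nat.card_coe_set_eq _).trans_le (h x)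

lemma scolOn_le {n : ℕ} (h : ∀ x, (sreach G le r x).ncard ≤ n) : scolOn G le r ≤ n :=
  Finset.sup_le fun x _ => (Nat.card_coe_set_eq _).trans_le (h x)

lemma ncard_wreach_le_wcolOn_of_le {r' : ℕ} (h : r ≤ r') (x : V) :
    (wreach G le r x).ncard ≤ wcolOn G le r' :=
  (Set.ncard_le_ncard (wreach_mono h)).trans (ncard_wreach_le_wcolOn x)

lemma ncard_wreach_le_scolOn_pow (σ : LinearOrder V) {s t : ℕ} (ht : t ≤ s) (x : V) :
    (wreach G σ.le t x).ncard ≤ scolOn G σ.le s ^ t := by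
  induction t generalizing x with
  | zero => simpa using Set.ncard_le_ncard (wreach_zero (G := G) (le := σ.le) (x := x))
  | succ t ih =>
    calc (wreach G σ.le (t + 1) x).ncard
        ≤ (⋃ z ∈ sreach G σ.le (t + 1) x, wreach G σ.le t z).ncard :=
          Set.ncard_le_ncard (wreach_subset_biUnion_sreach σ)
      _ ≤ (sreach G σ.le (t + 1) x).ncard * scolOn G σ.le s ^ t :=
          Set.ncard_biUnion_le_mul (Set.toFinite _) fun z _ => ih (by omega) z
      _ ≤ scolOn G σ.le s * scolOn G σ.le s ^ t := by
          gcongr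
          exact (Set.ncard_le_ncard (sreach_mono ht)).trans (ncard_sreach_le_scolOn x)
      _ = scolOn G σ.le s ^ (t + 1) := (pow_succ' _ _).symm

lemma wcolOn_le_scolOn_pow (σ : LinearOrder V) (r : ℕ) :
    wcolOn G σ.le r ≤ scolOn G σ.le r ^ r :=
  wcolOn_le (ncard_wreach_le_scolOn_pow σ le_rfl)

instance : Nonempty (LinearOrder V) :=
  ⟨LinearOrder.lift' _ (Fintype.equivFin V).injective⟩

lemma exists_wcolOn_eq_wcol (G : SimpleGraph V) (r : ℕ) :
    ∃ σ : LinearOrder V, wcolOn G σ.le r = wcol G r :=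
  ciInf_mem _

lemma exists_scolOn_eq_scol (G : SimpleGraph V) (r : ℕ) :
    ∃ σ : LinearOrder V, scolOn G σ.le r = scol G r :=
  ciInf_mem _

lemma wcol_le_scol_pow (G : SimpleGraph V) (r : ℕ) : wcol G r ≤ scol G r ^ r := by
  obtain ⟨σ, hσ⟩ := exists_scolOn_eq_scol G r
  calc wcol G r ≤ wcolOn G σ.le r := ciInf_le' _ σ
    _ ≤ scolOn G σ.le r ^ r := wcolOn_le_scolOn_pow σ r
    _ = scol G r ^ r := by rw [hσ]

end ColoringNumbers

section DegeneracyOrder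

variable {V : Type*}

lemma Finset.exists_injOn_forall_of_forall_exists (P : Set V → V → Prop)
    (h : ∀ R : Finset V, R.Nonempty → ∃ v ∈ R, P R v) (R : Finset V) :
    ∃ f : V → ℕ, Set.InjOn f R ∧ ∀ u ∈ R, P {y | y ∈ R ∧ f y ≤ f u} u := by
  classical
  induction R using Finset.strongInduction with
  | H R ih =>
    rcases R.eq_empty_or_nonempty with rfl | hR
    · exact ⟨fun _ => 0, by simp, by simp⟩
    obtain ⟨v, hv, hPv⟩ := h R hR
    obtain ⟨f, hf, hPf⟩ := ih (R.erase v) (Finset.erase_ssubset hv)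
    -- `v` is placed above everything else in `R`.
    have hlt : ∀ w ∈ R, f w < R.sup f + 1 := fun w hw => Nat.lt_succ_of_le (Finset.le_sup hw)
    refine ⟨Function.update f v (R.sup f + 1), ?_, fun u hu => ?_⟩
    · intro a ha b hb hab
      by_cases hav : a = v <;> by_cases hbv : b = v <;>
        simp only [Function.update_apply, hav, hbv, if_true, if_false] at hab
      · exact hav.trans hbv.symm
      · exact absurd hab (hlt b hb).ne'
      · exact absurd hab (hlt a ha).ne
      · exact hf (by simp [hav, ha]) (by simp [hbv, hb]) hab
    by_cases huv : u = v
    · subst huv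
      convert hPv using 1
      ext y
      simp only [Set.mem_ofPred_eq, Finset.mem_coe, Function.update_self, and_iff_left_iff_imp]
      intro hy
      by_cases hyu : y = u
      · simp [hyu]
      · simpa [hyu] using (hlt y hy).le
    · convert hPf u (Finset.mem_erase.mpr ⟨huv, hu⟩) using 1
      ext y
      by_cases hyv : y = v
      · simpa [hyv, huv, hv] using hlt u hu
      · simp [hyv, huv]

lemma exists_linearOrder_forall_of_forall_exists [Fintype V] (P : Set V → V → Prop)
    (h : ∀ R : Finset V, R.Nonempty → ∃ v ∈ R, P R v) :
    ∃ τ : LinearOrder V, ∀ u, P {y | τ.le y u} u := by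
  obtain ⟨f, hf, hP⟩ := Finset.exists_injOn_forall_of_forall_exists P h Finset.univ
  refine ⟨LinearOrder.lift' f (by simpa using hf), fun u => ?_⟩
  have hPu := hP u (Finset.mem_univ u)
  simp only [Finset.mem_univ, true_and] at hPu
  exact hPu

end DegeneracyOrder

open Finset in
lemma Finset.mul_card_filter_lt_le {α : Type*} (s : Finset α) (f : α → ℕ) {c m : ℕ}
    (h : ∑ x ∈ s, f x ≤ c * #s) : m * #{x ∈ s | m * c < f x} ≤ #s := by
  have hB : #{x ∈ s | m * c < f x} * (m * c + 1) ≤ c * #s :=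
    calc #{x ∈ s | m * c < f x} * (m * c + 1) ≤ ∑ x ∈ s with m * c < f x, f x :=
          card_nsmul_le_sum _ f (m * c + 1) fun x hx => (mem_filter.mp hx).2
      _ ≤ ∑ x ∈ s, f x := sum_le_sum_of_subset (filter_subset _ _)
      _ ≤ c * #s := h
  by_contra! hlt
  nlinarith [Nat.mul_le_mul_left c hlt]

open Finset in
/-- Markov's inequality for each family, then a union bound over the `card ι` families. -/
lemma Finset.exists_mem_forall_ncard_le {V ι : Type*} [Fintype ι] (W : ι → V → Set V)
    {c : ι → ℕ} (hW : ∀ i y, (W i y).Finite ∧ (W i y).ncard ≤ c i) {R : Finset V}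
    (hR : R.Nonempty) :
    ∃ v ∈ R, ∀ i, {y | y ∈ R ∧ v ∈ W i y}.ncard ≤ (Fintype.card ι + 1) * c i := by
  classical
  have hsum : ∀ i, ∑ v ∈ R, #{y ∈ R | v ∈ W i y} ≤ c i * #R := fun i =>
    calc ∑ v ∈ R, #{y ∈ R | v ∈ W i y} = ∑ y ∈ R, #{v ∈ R | v ∈ W i y} :=
          sum_card_bipartiteAbove_eq_sum_card_bipartiteBelow (fun v y => v ∈ W i y)
      _ ≤ ∑ _y ∈ R, c i := sum_le_sum fun y _ => by
          refine le_trans ?_ (hW i y).2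
          rw [← Set.ncard_coe_finset, coe_filter]
          exact Set.ncard_le_ncard (fun v hv => hv.2) (hW i y).1
      _ = c i * #R := by rw [sum_const, smul_eq_mul, mul_comm]
  set bad : ι → Finset V := fun i => {v ∈ R | (Fintype.card ι + 1) * c i < #{y ∈ R | v ∈ W i y}}
  have hbad : (Fintype.card ι + 1) * ∑ i, #(bad i) ≤ Fintype.card ι * #R := by
    rw [mul_sum]
    simpa using sum_le_sum fun i (_ : i ∈ univ) => R.mul_card_filter_lt_le _ (hsum i)
  have hcard : #(univ.biUnion bad) < #R :=
    calc #(univ.biUnion bad) ≤ ∑ i, #(bad i) := card_biUnion_le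
      _ < #R := by nlinarith [hR.card_pos]
  obtain ⟨v, hv, hvbad⟩ := exists_mem_notMem_of_card_lt_card hcard
  refine ⟨v, hv, fun i => ?_⟩
  have hvi : v ∉ bad i := fun h => hvbad (mem_biUnion.mpr ⟨i, mem_univ i, h⟩)
  simp only [bad, mem_filter, hv, true_and, not_lt] at hvi
  rwa [← coe_filter, Set.ncard_coe_finset]

lemma exists_linearOrder_forall_ncard_le {V ι : Type*} [Fintype V] [Fintype ι]
    (W : ι → V → Set V) {c : ι → ℕ} (hW : ∀ i y, (W i y).ncard ≤ c i) :
    ∃ τ : LinearOrder V, ∀ u i, {y | τ.le y u ∧ u ∈ W i y}.ncard ≤ (Fintype.card ι + 1) * c i :=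
  exists_linearOrder_forall_of_forall_exists
    (fun R u => ∀ i, {y | y ∈ R ∧ u ∈ W i y}.ncard ≤ (Fintype.card ι + 1) * c i)
    fun _ hR => Finset.exists_mem_forall_ncard_le W (fun i y => ⟨Set.toFinite _, hW i y⟩) hR

lemma scolOn_le_mul {V : Type*} [Fintype V] {G : SimpleGraph V} {r c d : ℕ}
    (σ τ : LinearOrder V) (hc : ∀ x, (wreach G σ.le r x).ncard ≤ c)
    (hd : ∀ μ, {y | τ.le y μ ∧ μ ∈ wreach G σ.le r y}.ncard ≤ d) :
    scolOn G τ.le r ≤ c * d :=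
  scolOn_le fun x =>
    calc (sreach G τ.le r x).ncard
        ≤ (⋃ μ ∈ wreach G σ.le r x, {y | τ.le y μ ∧ μ ∈ wreach G σ.le r y}).ncard :=
          Set.ncard_le_ncard (sreach_subset_biUnion_wreach σ τ)
      _ ≤ (wreach G σ.le r x).ncard * d := Set.ncard_biUnion_le_mul (Set.toFinite _) fun μ _ => hd μ
      _ ≤ c * d := Nat.mul_le_mul_right d (hc x)

theorem uniform_order_many_graphs_general {V : Type*} [Fintype V] (k : ℕ)
    (G : Fin k → SimpleGraph V) (r : Fin k → ℕ) :
    ∃ σ : LinearOrder V, ∀ i,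
      scolOn (G i) σ.le (r i) ≤ (k + 1) * (wcol (G i) (2 * r i)) ^ 2 ∧
      (k + 1) * (wcol (G i) (2 * r i)) ^ 2 ≤
        (k + 1) * (scol (G i) (2 * r i)) ^ (4 * r i) := by
  choose σ hσ using fun i => exists_wcolOn_eq_wcol (G i) (2 * r i)
  have hwreach : ∀ i y, (wreach (G i) (σ i).le (r i) y).ncard ≤ wcol (G i) (2 * r i) :=
    fun i y => hσ i ▸ ncard_wreach_le_wcolOn_of_le (by omega) y
  obtain ⟨τ, hτ⟩ := exists_linearOrder_forall_ncard_le _ hwreach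
  refine ⟨τ, fun i => ⟨?_, ?_⟩⟩
  · calc scolOn (G i) τ.le (r i) ≤ wcol (G i) (2 * r i) * ((k + 1) * wcol (G i) (2 * r i)) :=
          scolOn_le_mul (σ i) τ (hwreach i) fun μ => by simpa using hτ μ i
      _ = (k + 1) * wcol (G i) (2 * r i) ^ 2 := by ring
  · calc (k + 1) * wcol (G i) (2 * r i) ^ 2
        ≤ (k + 1) * (scol (G i) (2 * r i) ^ (2 * r i)) ^ 2 := by
          gcongr
          exact wcol_le_scol_pow _ _
      _ = (k + 1) * scol (G i) (2 * r i) ^ (4 * r i) := by ring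

/-- a single ordering good for several graphs on a common
vertex set, each with its own distance. -/
theorem uniform_order_many_graphs {V : Type*} [Fintype V] (k : ℕ)
    (G : Fin k → SimpleGraph V) (r : Fin k → ℕ) (hr : ∀ i, 0 < r i) :
    ∃ σ : LinearOrder V, ∀ i,
      scolOn (G i) σ.le (r i) ≤ (k + 1) * (wcol (G i) (2 * r i)) ^ 2 ∧
      (k + 1) * (wcol (G i) (2 * r i)) ^ 2 ≤
        (k + 1) * (scol (G i) (2 * r i)) ^ (4 * r i) :=
  uniform_order_many_graphs_general k G r
end

section
/- In the graph G of Example 1 (parameters n ≥ t ≥ 4, r < r'): for any ordering σ of G with X <_σ Z <_σ Y, we have scol_{r'}(G,σ) ≤ 4n − 6. -/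
open SimpleGraph

/-! ### The graph of Example 1. -/

/-- Ordered pairs `(i,j)` with `i ≠ j`. -/
abbrev Idx (n : ℕ) := {p : Fin n × Fin n // p.1 ≠ p.2}

/-- Vertex set of Example 1: `Z ⊕ (X ⊕ (Y_P ⊕ Y_Q))`, where `Y_P` (resp. `Y_Q`)
are the internal vertices of the paths `P^h_{i,j}` (resp. `Q^h_{i,j}`). -/
abbrev ExV (n t r r' : ℕ) : Type :=
  (Fin n × Fin t) ⊕ (Idx n ⊕ ((Idx n × Fin t × Fin (r - 1)) ⊕ (Idx n × Fin t × Fin (r' - r - 1))))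

variable (n t r r' : ℕ)

def zV (i : Fin n) (h : Fin t) : ExV n t r r' := Sum.inl (i, h)
def xV (p : Idx n) : ExV n t r r' := Sum.inr (Sum.inl p)
def pIn (p : Idx n) (h : Fin t) (k : Fin (r - 1)) : ExV n t r r' :=
  Sum.inr (Sum.inr (Sum.inl (p, h, k)))
def qIn (p : Idx n) (h : Fin t) (k : Fin (r' - r - 1)) : ExV n t r r' :=
  Sum.inr (Sum.inr (Sum.inr (p, h, k)))

/-- The `k`-th vertex of the path `P^h_{i,j}` (of length `r`, from `z_i^h` to `x_{i,j}`). -/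
def pv (p : Idx n) (h : Fin t) (k : ℕ) : ExV n t r r' :=
  if h0 : k = 0 then zV n t r r' p.1.1 h
  else if hk : k < r then pIn n t r r' p h ⟨k - 1, by omega⟩
  else xV n t r r' p

/-- The `k`-th vertex of the path `Q^h_{i,j}` (of length `r' - r`, from `x_{i,j}` to `z_j^h`). -/
def qv (p : Idx n) (h : Fin t) (k : ℕ) : ExV n t r r' :=
  if h0 : k = 0 then xV n t r r' p
  else if hk : k < r' - r then qIn n t r r' p h ⟨k - 1, by omega⟩
  else zV n t r r' p.1.2 h

/-- The graph of Example 1: the union of all the paths `P^h_{i,j}` and `Q^h_{i,j}`. -/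
def ExG : SimpleGraph (ExV n t r r') :=
  SimpleGraph.fromRel fun u v => ∃ (p : Idx n) (h : Fin t) (k : ℕ),
    (k < r ∧ pv n t r r' p h k = u ∧ pv n t r r' p h (k + 1) = v) ∨
    (k < r' - r ∧ qv n t r r' p h k = u ∧ qv n t r r' p h (k + 1) = v)

/-!
Let `S` be the strong `r'`-reach of a vertex `x`.

If `x = x_{i,j} ∈ X`, then `S ⊆ X`, since all other vertices come later. A potential that grows
by at most one along every edge, vanishes at `x_{i,j}` and exceeds `r'` at every `x_{k,l}` with
`{k, l} ∩ {i, j} = ∅` shows that `S ⊆ X_i ∪ X_j`, a set of `4n - 6` vertices.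

If `x = z_i^h ∈ Z`, a strongly reaching path cannot pass through `X`, so it stays among `z_i^h`
and the internal vertices of the paths at `z_i^h` until it stops in `X_i`; hence `|S| ≤ 2n - 1`.

If `x ∈ Y`, then `x` is internal to a path of `G` whose two ends precede it. A strongly reaching
path stays on this path, and of two reached vertices on the same side of `x` the nearer one would
be an internal vertex of the path to the farther one; hence `|S| ≤ 3`.
-/

namespace SimpleGraph

variable {V : Type*} {G : SimpleGraph V}

theorem Walk.apply_le_apply_add_length (f : V → ℕ) (hf : ∀ a b, G.Adj a b → f b ≤ f a + 1)
    {u v : V} (w : G.Walk u v) : f v ≤ f u + w.length := by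
  induction w with
  | nil => simp
  | cons hab _ ih => have := hf _ _ hab; simp only [Walk.length_cons]; omega

/-- A strongly reaching path from `x` meets `B`, whose vertices are not `≥ x`, only at its last
vertex, so it cannot leave `A` before. -/
theorem sreach_subset_union (le : V → V → Prop) (r : ℕ) {A B : Set V} {x : V} (hx : x ∈ A)
    (hA : ∀ a ∈ A, ∀ b, G.Adj a b → b ∈ A ∪ B) (hB : ∀ b ∈ B, ¬ le x b) :
    sreach G le r x ⊆ A ∪ B := by
  rintro y ⟨-, w, -, -, hw⟩
  replace hw : ∀ v ∈ w.support, v ≠ y → v ∉ B :=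
    fun v hv hvy hvB => hB v hvB (hw v hv hvy)
  clear hB
  induction w with
  | nil => exact Or.inl hx
  | @cons u b y hub w ih =>
    rcases hA u hx b hub with hbA | hbB
    · exact ih hbA fun v hv => hw v (List.mem_cons_of_mem _ hv)
    · by_cases hby : b = y
      · exact hby ▸ Or.inr hbB
      · exact absurd hbB (hw b (by simp) hby)

theorem Walk.exists_end_eq_of_segment (sv : ℕ → V) {lo hi : ℕ}
    (hnbr : ∀ k, lo < k → k < hi → ∀ b, G.Adj (sv k) b →
      b = sv (k - 1) ∨ b = sv (k + 1))
    {u y : V} (w : G.Walk u y) {k : ℕ} (hu : u = sv k) (hlo : lo < k) (hhi : k < hi)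
    (hw : ∀ v ∈ w.support, v ≠ y → v ≠ sv lo ∧ v ≠ sv hi) :
    ∃ m, lo ≤ m ∧ m ≤ hi ∧ y = sv m ∧
      ∀ j, (k ≤ j ∧ j < m ∨ m < j ∧ j ≤ k) → sv j ∈ w.support := by
  induction w generalizing k with
  | nil => exact ⟨k, hlo.le, hhi.le, hu, fun j hj => by omega⟩
  | @cons u b y hub w ih =>
    subst hu
    obtain ⟨k', hk', hb⟩ : ∃ k', (k' = k - 1 ∨ k' = k + 1) ∧ b = sv k' := by
      rcases hnbr k hlo hhi b hub with hb | hb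
      exacts [⟨_, Or.inl rfl, hb⟩, ⟨_, Or.inr rfl, hb⟩]
    by_cases hby : b = y
    · subst hby
      exact ⟨k', by omega, by omega, hb, fun j hj => by
        obtain rfl : j = k := by omega
        exact List.mem_cons_self ..⟩
    · obtain ⟨hblo, hbhi⟩ := hw b (by simp) hby
      have hk'lo : k' ≠ lo := by rintro rfl; exact hblo hb
      have hk'hi : k' ≠ hi := by rintro rfl; exact hbhi hb
      obtain ⟨m, hlom, hmhi, rfl, hvis⟩ := ih hb (by omega) (by omega)
        fun v hv => hw v (List.mem_cons_of_mem _ hv)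
      refine ⟨m, hlom, hmhi, rfl, fun j hj => ?_⟩
      rcases eq_or_ne j k with rfl | hjk
      · exact List.mem_cons_self ..
      · exact List.mem_cons_of_mem _ (hvis j (by omega))

section Segment

variable (le : V → V → Prop) (r : ℕ) (sv : ℕ → V) {lo a hi : ℕ}
  (hlo : lo < a) (hhi : a < hi) (hinj : Set.InjOn sv (Set.Icc lo hi))
  (hnbr : ∀ k, lo < k → k < hi → ∀ b, G.Adj (sv k) b → b = sv (k - 1) ∨ b = sv (k + 1))
  (hlo_end : ¬ le (sv a) (sv lo)) (hhi_end : ¬ le (sv a) (sv hi))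
include hlo hhi hinj hnbr hlo_end hhi_end

theorem exists_eq_of_mem_sreach_of_segment {y : V} (hy : y ∈ sreach G le r (sv a)) :
    ∃ m ∈ Set.Icc lo hi, y = sv m ∧
      ∀ j ∈ Set.Icc lo hi, (a ≤ j ∧ j < m ∨ m < j ∧ j ≤ a) → le (sv a) (sv j) := by
  obtain ⟨-, w, -, -, hw⟩ := hy
  obtain ⟨m, hlom, hmhi, rfl, hvis⟩ := w.exists_end_eq_of_segment sv hnbr rfl hlo hhi
    fun v hv hvy => ⟨fun h => hlo_end (h ▸ hw v hv hvy), fun h => hhi_end (h ▸ hw v hv hvy)⟩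
  refine ⟨m, ⟨hlom, hmhi⟩, rfl, fun j hj hjm => hw _ (hvis j hjm) fun he => ?_⟩
  have := hinj hj ⟨hlom, hmhi⟩ he
  omega

theorem ncard_sreach_le_three_of_segment [Std.Antisymm le] :
    (sreach G le r (sv a)).ncard ≤ 3 := by
  set I := {m | m ∈ Set.Icc lo hi ∧ sv m ∈ sreach G le r (sv a)}
  have hI : I.Finite := (Set.finite_Icc lo hi).subset fun m hm => hm.1
  have hS : sreach G le r (sv a) ⊆ sv '' I := fun y hy => by
    obtain ⟨m, hm, rfl, -⟩ :=
      exists_eq_of_mem_sreach_of_segment le r sv hlo hhi hinj hnbr hlo_end hhi_end hy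
    exact ⟨m, ⟨hm, hy⟩, rfl⟩
  -- of two reached vertices on the same side of `sv a`, the nearer one lies on the path to the
  -- farther one, so it is both `≤ sv a` and `≥ sv a`
  have same_side :
      ∀ m₁ ∈ I, ∀ m₂ ∈ I, (m₁ < a ∧ m₂ < a ∨ a < m₁ ∧ a < m₂) → m₁ = m₂ := by
    have key : ∀ m ∈ I, ∀ j ∈ I, (a ≤ j ∧ j < m ∨ m < j ∧ j ≤ a) → j = a := by
      rintro m ⟨hm, hmS⟩ j ⟨hj, hjS⟩ hjm
      obtain ⟨m', hm', he, hbetween⟩ :=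
        exists_eq_of_mem_sreach_of_segment le r sv hlo hhi hinj hnbr hlo_end hhi_end hmS
      obtain rfl := hinj hm hm' he
      exact hinj hj ⟨hlo.le, hhi.le⟩ (antisymm hjS.1 (hbetween j hj hjm))
    intro m₁ h₁ m₂ h₂ hside
    by_contra hne
    rcases Nat.lt_or_gt_of_ne hne with h | h <;> rcases hside with h' | h' <;>
      first
      | have := key m₁ h₁ m₂ h₂ (by omega); omega
      | have := key m₂ h₂ m₁ h₁ (by omega); omega
  have hleft : (I ∩ Set.Iio a).ncard ≤ 1 :=
    (Set.ncard_le_one (hI.subset Set.inter_subset_left)).2 fun m₁ h₁ m₂ h₂ =>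
      same_side m₁ h₁.1 m₂ h₂.1 (Or.inl ⟨h₁.2, h₂.2⟩)
  have hright : (I ∩ Set.Ioi a).ncard ≤ 1 :=
    (Set.ncard_le_one (hI.subset Set.inter_subset_left)).2 fun m₁ h₁ m₂ h₂ =>
      same_side m₁ h₁.1 m₂ h₂.1 (Or.inr ⟨h₁.2, h₂.2⟩)
  have hsplit : I ⊆ insert a ((I ∩ Set.Iio a) ∪ (I ∩ Set.Ioi a)) := by
    intro m hm
    rcases lt_trichotomy m a with h | h | h
    exacts [Or.inr (Or.inl ⟨hm, h⟩), Or.inl h, Or.inr (Or.inr ⟨hm, h⟩)]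
  calc (sreach G le r (sv a)).ncard ≤ (sv '' I).ncard := Set.ncard_le_ncard hS (hI.image sv)
    _ ≤ I.ncard := Set.ncard_image_le hI
    _ ≤ (insert a ((I ∩ Set.Iio a) ∪ (I ∩ Set.Ioi a))).ncard :=
      Set.ncard_le_ncard hsplit (((hI.subset Set.inter_subset_left).union
        (hI.subset Set.inter_subset_left)).insert a)
    _ ≤ (I ∩ Set.Iio a).ncard + (I ∩ Set.Ioi a).ncard + 1 :=
      (Set.ncard_insert_le _ _).trans (Nat.add_le_add_right (Set.ncard_union_le _ _) 1)
    _ ≤ 3 := by omega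

end Segment

end SimpleGraph

section Incident

variable {n : ℕ}

/-- The pairs `p` with `x_p ∈ X_i`. -/
def incidentPairs (i : Fin n) : Set (Idx n) := {p | p.1.1 = i ∨ p.1.2 = i}

theorem ncard_incidentPairs_le (i : Fin n) : (incidentPairs i).ncard ≤ 2 * (n - 1) := by
  have hcompl : ({i}ᶜ : Set (Fin n)).ncard = n - 1 := by
    rw [Set.ncard_compl, Set.ncard_singleton, Nat.card_eq_fintype_card, Fintype.card_fin]
  have hfst : {p : Idx n | p.1.1 = i}.ncard ≤ n - 1 :=
    hcompl ▸ Set.ncard_le_ncard_of_injOn (fun p => p.1.2)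
      (fun p hp => fun he => p.2 (hp.trans he.symm))
      fun p₁ h₁ p₂ h₂ he => Subtype.ext (Prod.ext (h₁.trans h₂.symm) he)
  have hsnd : {p : Idx n | p.1.2 = i}.ncard ≤ n - 1 :=
    hcompl ▸ Set.ncard_le_ncard_of_injOn (fun p => p.1.1)
      (fun p hp => fun he => p.2 (he.trans hp.symm))
      fun p₁ h₁ p₂ h₂ he => Subtype.ext (Prod.ext he (h₁.trans h₂.symm))
  calc (incidentPairs i).ncard ≤ {p : Idx n | p.1.1 = i}.ncard + {p : Idx n | p.1.2 = i}.ncard :=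
        Set.ncard_union_le _ _
    _ ≤ 2 * (n - 1) := by omega

/-- Inclusion–exclusion: `X_i` and `X_j` share `x_{i,j}` and `x_{j,i}`. -/
theorem ncard_incidentPairs_union_le {i j : Fin n} (hij : i ≠ j) :
    (incidentPairs i ∪ incidentPairs j).ncard ≤ 4 * n - 6 := by
  have hinter : ({⟨(i, j), hij⟩, ⟨(j, i), hij.symm⟩} : Set (Idx n)) ⊆
      incidentPairs i ∩ incidentPairs j := by
    rintro p (rfl | rfl)
    exacts [⟨Or.inl rfl, Or.inr rfl⟩, ⟨Or.inr rfl, Or.inl rfl⟩]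
  have htwo := (Set.ncard_pair fun he => hij (congrArg (·.1.1) he)).symm.le.trans
    (Set.ncard_le_ncard hinter)
  have := Set.ncard_union_add_ncard_inter (incidentPairs i) (incidentPairs j)
  have := ncard_incidentPairs_le i
  have := ncard_incidentPairs_le j
  omega

end Incident

section Example1

variable {n t r r' : ℕ}

/-- The `k`-th vertex of the path `P^h_p ∪ Q^h_p` of length `r'` from `z_{p.1}^h` to
`z_{p.2}^h`, which passes through `x_p` at `k = r`. -/
def pqv (n t r r' : ℕ) (p : Idx n) (h : Fin t) (k : ℕ) : ExV n t r r' :=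
  if k ≤ r then pv n t r r' p h k else qv n t r r' p h (k - r)

variable {p q : Idx n} {h h' : Fin t} {k : ℕ}

theorem pqv_zero : pqv n t r r' p h 0 = zV n t r r' p.1.1 h := by
  simp [pqv, pv]

theorem pqv_of_pos_of_lt (hk0 : 0 < k) (hkr : k < r) :
    pqv n t r r' p h k = pIn n t r r' p h ⟨k - 1, by omega⟩ := by
  simp [pqv, pv, hkr.le, hkr, hk0.ne']

theorem pqv_r (hr : 1 ≤ r) : pqv n t r r' p h r = xV n t r r' p := by
  simp [pqv, pv, show r ≠ 0 by omega]

theorem pqv_of_lt_of_lt (hrk : r < k) (hkr' : k < r') :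
    pqv n t r r' p h k = qIn n t r r' p h ⟨k - r - 1, by omega⟩ := by
  simp [pqv, qv, hrk.not_ge, show k - r ≠ 0 by omega, show k - r < r' - r by omega]

theorem pqv_r' (hrr' : r < r') : pqv n t r r' p h r' = zV n t r r' p.1.2 h := by
  simp [pqv, qv, hrr'.not_ge, show r' - r ≠ 0 by omega]

theorem pqv_cases (hr : 1 ≤ r) (hrr' : r < r') (hk : k ≤ r') :
    k = 0 ∧ pqv n t r r' p h k = zV n t r r' p.1.1 h ∨
    (∃ hk : 0 < k ∧ k < r, pqv n t r r' p h k = pIn n t r r' p h ⟨k - 1, by omega⟩) ∨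
    k = r ∧ pqv n t r r' p h k = xV n t r r' p ∨
    (∃ hk : r < k ∧ k < r', pqv n t r r' p h k = qIn n t r r' p h ⟨k - r - 1, by omega⟩) ∨
    k = r' ∧ pqv n t r r' p h k = zV n t r r' p.1.2 h := by
  rcases Nat.eq_zero_or_pos k with rfl | hk0
  · exact Or.inl ⟨rfl, pqv_zero⟩
  rcases lt_trichotomy k r with hkr | rfl | hrk
  · exact Or.inr (Or.inl ⟨⟨hk0, hkr⟩, pqv_of_pos_of_lt hk0 hkr⟩)
  · exact Or.inr (Or.inr (Or.inl ⟨rfl, pqv_r hr⟩))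
  rcases hk.lt_or_eq with hkr' | rfl
  · exact Or.inr (Or.inr (Or.inr (Or.inl ⟨⟨hrk, hkr'⟩, pqv_of_lt_of_lt hrk hkr'⟩)))
  · exact Or.inr (Or.inr (Or.inr (Or.inr ⟨rfl, pqv_r' hrr'⟩)))

section
variable (hr : 1 ≤ r) (hrr' : r < r') (hk : k ≤ r')
include hr hrr' hk

theorem pqv_eq_zV_iff {a : Fin n} :
    pqv n t r r' p h k = zV n t r r' a h' ↔
      h = h' ∧ (k = 0 ∧ p.1.1 = a ∨ k = r' ∧ p.1.2 = a) := by
  rcases pqv_cases (p := p) (h := h) hr hrr' hk with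
    ⟨hk, e⟩ | ⟨hk, e⟩ | ⟨hk, e⟩ | ⟨hk, e⟩ | ⟨hk, e⟩ <;>
    rw [e] <;> simp [zV, pIn, xV, qIn] <;> omega

theorem pqv_eq_xV_iff : pqv n t r r' p h k = xV n t r r' q ↔ k = r ∧ p = q := by
  rcases pqv_cases (p := p) (h := h) hr hrr' hk with
    ⟨hk, e⟩ | ⟨hk, e⟩ | ⟨hk, e⟩ | ⟨hk, e⟩ | ⟨hk, e⟩ <;>
    rw [e] <;> simp [zV, pIn, xV, qIn] <;> omega

theorem pqv_eq_pIn_iff {c : Fin (r - 1)} :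
    pqv n t r r' p h k = pIn n t r r' q h' c ↔ p = q ∧ h = h' ∧ k = c + 1 := by
  rcases pqv_cases (p := p) (h := h) hr hrr' hk with
    ⟨hk, e⟩ | ⟨hk, e⟩ | ⟨hk, e⟩ | ⟨hk, e⟩ | ⟨hk, e⟩ <;>
    rw [e] <;> simp [zV, pIn, xV, qIn, Fin.ext_iff] <;> omega

theorem pqv_eq_qIn_iff {c : Fin (r' - r - 1)} :
    pqv n t r r' p h k = qIn n t r r' q h' c ↔ p = q ∧ h = h' ∧ k = r + c + 1 := by
  rcases pqv_cases (p := p) (h := h) hr hrr' hk with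
    ⟨hk, e⟩ | ⟨hk, e⟩ | ⟨hk, e⟩ | ⟨hk, e⟩ | ⟨hk, e⟩ <;>
    rw [e] <;> simp [zV, pIn, xV, qIn, Fin.ext_iff] <;> omega

end

theorem pqv_eq_pqv_of_interior (hr : 1 ≤ r) (hrr' : r < r') {k' : ℕ} (hk0 : 0 < k)
    (hkr' : k < r') (hkr : k ≠ r) (hk' : k' ≤ r')
    (he : pqv n t r r' q h' k' = pqv n t r r' p h k) :
    q = p ∧ h' = h ∧ k' = k := by
  rcases hkr.lt_or_gt with hkr | hrk
  · rw [pqv_of_pos_of_lt hk0 hkr, pqv_eq_pIn_iff hr hrr' hk'] at he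
    exact ⟨he.1, he.2.1, by simp only [he.2.2]; omega⟩
  · rw [pqv_of_lt_of_lt hrk hkr', pqv_eq_qIn_iff hr hrr' hk'] at he
    exact ⟨he.1, he.2.1, by simp only [he.2.2]; omega⟩

theorem pqv_injOn (hr : 1 ≤ r) (hrr' : r < r') (p : Idx n) (h : Fin t) :
    Set.InjOn (pqv n t r r' p h) (Set.Iic r') := by
  intro k hk k' hk' he
  rcases pqv_cases (p := p) (h := h) hr hrr' hk with
    ⟨hk0, e⟩ | ⟨hk, -⟩ | ⟨hkr, e⟩ | ⟨hk, -⟩ | ⟨hkr', e⟩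
  · rw [e, eq_comm, pqv_eq_zV_iff hr hrr' hk'] at he
    have := p.2
    grind
  · exact (pqv_eq_pqv_of_interior hr hrr' hk.1 (by omega) hk.2.ne hk' he.symm).2.2.symm
  · rw [e, eq_comm, pqv_eq_xV_iff hr hrr' hk'] at he
    omega
  · exact (pqv_eq_pqv_of_interior hr hrr' (by omega) hk.2 hk.1.ne' hk' he.symm).2.2.symm
  · rw [e, eq_comm, pqv_eq_zV_iff hr hrr' hk'] at he
    have := p.2
    grind

theorem pIn_eq_pqv {c : Fin (r - 1)} : pIn n t r r' p h c = pqv n t r r' p h (c + 1) := by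
  rw [pqv_of_pos_of_lt (by omega) (by omega)]
  rfl

theorem qIn_eq_pqv {c : Fin (r' - r - 1)} :
    qIn n t r r' p h c = pqv n t r r' p h (r + c + 1) := by
  rw [pqv_of_lt_of_lt (by omega) (by omega)]
  congr 1
  ext
  simp only
  omega

theorem pqv_of_le (hk : k ≤ r) : pqv n t r r' p h k = pv n t r r' p h k := if_pos hk

theorem pqv_add (hr : 1 ≤ r) : pqv n t r r' p h (r + k) = qv n t r r' p h k := by
  rcases Nat.eq_zero_or_pos k with rfl | hk0
  · rw [add_zero, pqv_r hr]; simp [qv]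
  · simp [pqv, show ¬ r + k ≤ r by omega]

theorem exists_pqv_of_exG_adj (hr : 1 ≤ r) (hrr' : r < r') {u v : ExV n t r r'}
    (huv : (ExG n t r r').Adj u v) :
    ∃ (p : Idx n) (h : Fin t) (k : ℕ), k < r' ∧
      (u = pqv n t r r' p h k ∧ v = pqv n t r r' p h (k + 1) ∨
        v = pqv n t r r' p h k ∧ u = pqv n t r r' p h (k + 1)) := by
  have edge : ∀ a b : ExV n t r r', (∃ (p : Idx n) (h : Fin t) (k : ℕ),
      (k < r ∧ pv n t r r' p h k = a ∧ pv n t r r' p h (k + 1) = b) ∨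
      (k < r' - r ∧ qv n t r r' p h k = a ∧ qv n t r r' p h (k + 1) = b)) →
      ∃ (p : Idx n) (h : Fin t) (k : ℕ), k < r' ∧
        a = pqv n t r r' p h k ∧ b = pqv n t r r' p h (k + 1) := by
    rintro a b ⟨p, h, k, ⟨hk, rfl, rfl⟩ | ⟨hk, rfl, rfl⟩⟩
    · exact ⟨p, h, k, by omega, (pqv_of_le hk.le).symm, (pqv_of_le hk).symm⟩
    · exact ⟨p, h, r + k, by omega, (pqv_add hr).symm, (pqv_add hr).symm⟩
  obtain ⟨-, huv | huv⟩ := huv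
  · obtain ⟨p, h, k, hk, rfl, rfl⟩ := edge u v huv
    exact ⟨p, h, k, hk, Or.inl ⟨rfl, rfl⟩⟩
  · obtain ⟨p, h, k, hk, rfl, rfl⟩ := edge v u huv
    exact ⟨p, h, k, hk, Or.inr ⟨rfl, rfl⟩⟩

theorem exG_adj_pqv_of_interior (hr : 1 ≤ r) (hrr' : r < r') (hk0 : 0 < k) (hkr' : k < r')
    (hkr : k ≠ r) {b : ExV n t r r'} (hadj : (ExG n t r r').Adj (pqv n t r r' p h k) b) :
    b = pqv n t r r' p h (k - 1) ∨ b = pqv n t r r' p h (k + 1) := by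
  obtain ⟨q, h', k', hk', ⟨he, rfl⟩ | ⟨rfl, he⟩⟩ := exists_pqv_of_exG_adj hr hrr' hadj
  · obtain ⟨rfl, rfl, rfl⟩ := pqv_eq_pqv_of_interior hr hrr' hk0 hkr' hkr hk'.le he.symm
    exact Or.inr rfl
  · obtain ⟨rfl, rfl, rfl⟩ := pqv_eq_pqv_of_interior hr hrr' hk0 hkr' hkr hk' he.symm
    exact Or.inl rfl

theorem exG_adj_zV (hr : 1 ≤ r) (hrr' : r < r') {i : Fin n} {b : ExV n t r r'}
    (hadj : (ExG n t r r').Adj (zV n t r r' i h) b) :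
    ∃ p : Idx n,
      p.1.1 = i ∧ b = pqv n t r r' p h 1 ∨ p.1.2 = i ∧ b = pqv n t r r' p h (r' - 1) := by
  obtain ⟨p, h', k, hk, ⟨he, rfl⟩ | ⟨rfl, he⟩⟩ := exists_pqv_of_exG_adj hr hrr' hadj
  · rw [eq_comm, pqv_eq_zV_iff hr hrr' hk.le] at he
    obtain ⟨rfl, ⟨rfl, hp⟩ | ⟨rfl, -⟩⟩ := he
    · exact ⟨p, Or.inl ⟨hp, rfl⟩⟩
    · omega
  · rw [eq_comm, pqv_eq_zV_iff hr hrr' (by omega)] at he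
    obtain ⟨rfl, ⟨hk0, -⟩ | ⟨hkr', hp⟩⟩ := he
    · omega
    · exact ⟨p, Or.inr ⟨hp, by rw [← hkr', Nat.add_sub_cancel]⟩⟩

theorem exists_pqv_eq_inr_inr (hk0 : 0 < k) (hkr' : k < r') (hkr : k ≠ r) :
    ∃ w, pqv n t r r' p h k = Sum.inr (Sum.inr w) := by
  rcases hkr.lt_or_gt with hkr | hrk
  · exact ⟨_, pqv_of_pos_of_lt hk0 hkr⟩
  · exact ⟨_, pqv_of_lt_of_lt hrk hkr'⟩

/-- `z_i^h` together with the internal vertices of the paths `P^h_{i,j}` and `Q^h_{j,i}`: the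
component of `z_i^h` in `G - X`. -/
def zStar (n t r r' : ℕ) (i : Fin n) (h : Fin t) : Set (ExV n t r r') :=
  insert (zV n t r r' i h) {v | ∃ p k, 0 < k ∧ k < r' ∧ k ≠ r ∧
    (p.1.1 = i ∧ k < r ∨ p.1.2 = i ∧ r < k) ∧ v = pqv n t r r' p h k}

theorem zStar_adj_subset (hr : 1 ≤ r) (hrr' : r < r') {i : Fin n} :
    ∀ a ∈ zStar n t r r' i h, ∀ b, (ExG n t r r').Adj a b →
      b ∈ zStar n t r r' i h ∪ xV n t r r' '' incidentPairs i := by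
  have mem : ∀ p k, k ≤ r' → (p.1.1 = i ∧ k ≤ r ∨ p.1.2 = i ∧ r ≤ k) →
      pqv n t r r' p h k ∈ zStar n t r r' i h ∪ xV n t r r' '' incidentPairs i := by
    intro p k hk hside
    rcases pqv_cases (p := p) (h := h) hr hrr' hk with
      ⟨hk0, e⟩ | ⟨hk, -⟩ | ⟨hkr, e⟩ | ⟨hk, -⟩ | ⟨hkr', e⟩
    · rw [e, show p.1.1 = i by omega]; exact Or.inl (Set.mem_insert _ _)
    · exact Or.inl (Or.inr ⟨p, k, hk.1, by omega, hk.2.ne, by omega, rfl⟩)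
    · rw [e]; exact Or.inr ⟨p, hside.imp And.left And.left, rfl⟩
    · exact Or.inl (Or.inr ⟨p, k, by omega, hk.2, hk.1.ne', by omega, rfl⟩)
    · rw [e, show p.1.2 = i by omega]; exact Or.inl (Set.mem_insert _ _)
  rintro a (rfl | ⟨p, k, hk0, hkr', hkr, hside, rfl⟩) b hab
  · obtain ⟨p, ⟨hp, rfl⟩ | ⟨hp, rfl⟩⟩ := exG_adj_zV hr hrr' hab
    · exact mem p 1 (by omega) (Or.inl ⟨hp, hr⟩)
    · exact mem p (r' - 1) (by omega) (Or.inr ⟨hp, by omega⟩)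
  · rcases exG_adj_pqv_of_interior hr hrr' hk0 hkr' hkr hab with rfl | rfl
    · exact mem p (k - 1) (by omega) (by omega)
    · exact mem p (k + 1) (by omega) (by omega)

end Example1

section Potential

variable {n t r r' : ℕ} (i j : Fin n)

/-- Lower bounds for the distance from `x_{i,j}`: `z_i^h` and `z_j^h` are at distance `r` and
`r' - r`, and a path to any other `z_a^h` has to run from `Z_i ∪ Z_j` through some `x` to
`Z_a`. -/
def zPot (r r' : ℕ) (a : Fin n) : ℕ :=
  if a = i then r else if a = j then r' - r else r' + min r (r' - r)

def xPot (r r' : ℕ) (p : Idx n) : ℕ :=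
  if p.1 = (i, j) then 0 else min (zPot i j r r' p.1.1 + r) (zPot i j r r' p.1.2 + (r' - r))

def pathPot (r r' : ℕ) (p : Idx n) (k : ℕ) : ℕ :=
  min (min (zPot i j r r' p.1.1 + k) (xPot i j r r' p + k.dist r)) (zPot i j r r' p.1.2 + (r' - k))

def pot : ExV n t r r' → ℕ
  | Sum.inl (a, _) => zPot i j r r' a
  | Sum.inr (Sum.inl p) => xPot i j r r' p
  | Sum.inr (Sum.inr (Sum.inl (p, _, c))) => pathPot i j r r' p (c + 1)
  | Sum.inr (Sum.inr (Sum.inr (p, _, c))) => pathPot i j r r' p (r + c + 1)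

variable {i j} {p : Idx n} {h : Fin t} {k : ℕ}

theorem zPot_xPot_bounds (hrr' : r < r') (hij : i ≠ j) :
    zPot i j r r' p.1.1 ≤ zPot i j r r' p.1.2 + r' ∧
    zPot i j r r' p.1.2 ≤ zPot i j r r' p.1.1 + r' ∧
    xPot i j r r' p ≤ zPot i j r r' p.1.1 + r ∧
    xPot i j r r' p ≤ zPot i j r r' p.1.2 + (r' - r) ∧
    zPot i j r r' p.1.1 ≤ xPot i j r r' p + r ∧
    zPot i j r r' p.1.2 ≤ xPot i j r r' p + (r' - r) := by
  obtain ⟨⟨a, b⟩, hab⟩ := p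
  simp only [xPot, zPot, Prod.mk.injEq]
  split_ifs <;> omega

theorem pot_pqv (hr : 1 ≤ r) (hrr' : r < r') (hij : i ≠ j) (hk : k ≤ r') :
    pot i j (pqv n t r r' p h k) = pathPot i j r r' p k := by
  have := zPot_xPot_bounds (p := p) hrr' hij
  rcases pqv_cases (p := p) (h := h) hr hrr' hk with
    ⟨rfl, e⟩ | ⟨hk, e⟩ | ⟨rfl, e⟩ | ⟨hk, e⟩ | ⟨rfl, e⟩ <;>
    rw [e] <;> simp only [pot, zV, xV, pIn, qIn, pathPot, Nat.dist] <;> omega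

theorem pot_le_pot_add_one (hr : 1 ≤ r) (hrr' : r < r') (hij : i ≠ j) {u v : ExV n t r r'}
    (huv : (ExG n t r r').Adj u v) : pot i j v ≤ pot i j u + 1 := by
  obtain ⟨p, h, k, hk, ⟨rfl, rfl⟩ | ⟨rfl, rfl⟩⟩ := exists_pqv_of_exG_adj hr hrr' huv <;>
    rw [pot_pqv hr hrr' hij hk.le, pot_pqv hr hrr' hij hk] <;>
    simp only [pathPot, Nat.dist] <;> omega

end Potential

section StrongReach

variable {n t r r' : ℕ} {p : Idx n} {h : Fin t} {k : ℕ}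
  (le : ExV n t r r' → ExV n t r r' → Prop)
  (hXZ : ∀ (p : Idx n) (a : Fin n × Fin t), ¬ le (Sum.inl a) (xV n t r r' p))
  (hZY : ∀ (a : Fin n × Fin t)
    (w : (Idx n × Fin t × Fin (r - 1)) ⊕ (Idx n × Fin t × Fin (r' - r - 1))),
    ¬ le (Sum.inr (Sum.inr w)) (Sum.inl a))
  (hXY : ∀ (p : Idx n)
    (w : (Idx n × Fin t × Fin (r - 1)) ⊕ (Idx n × Fin t × Fin (r' - r - 1))),
    ¬ le (Sum.inr (Sum.inr w)) (xV n t r r' p))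

include hXZ hZY in
theorem sreach_zV_subset (hr : 1 ≤ r) (hrr' : r < r') (l : ℕ) (i : Fin n) (h : Fin t) :
    sreach (ExG n t r r') le l (zV n t r r' i h) ⊆
      insert (zV n t r r' i h) (xV n t r r' '' incidentPairs i) := by
  intro y hy
  rcases sreach_subset_union le l (Set.mem_insert _ _) (zStar_adj_subset hr hrr')
    (by rintro _ ⟨p, -, rfl⟩; exact hXZ p (i, h)) hy with
    (rfl | ⟨p, k, hk0, hkr', hkr, -, rfl⟩) | hB
  · exact Set.mem_insert _ _
  · obtain ⟨w, e⟩ := exists_pqv_eq_inr_inr (p := p) (h := h) hk0 hkr' hkr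
    exact absurd hy.1 (e ▸ hZY _ w)
  · exact Or.inr hB

include hZY hXY in
theorem ncard_sreach_pqv_le_three [Std.Antisymm le] (hr : 1 ≤ r) (hrr' : r < r') (l : ℕ)
    (hk0 : 0 < k) (hkr' : k < r') (hkr : k ≠ r) :
    (sreach (ExG n t r r') le l (pqv n t r r' p h k)).ncard ≤ 3 := by
  obtain ⟨w, e⟩ := exists_pqv_eq_inr_inr (p := p) (h := h) hk0 hkr' hkr
  have nbr : ∀ j, 0 < j → j < r' → j ≠ r →
      ∀ b, (ExG n t r r').Adj (pqv n t r r' p h j) b →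
      b = pqv n t r r' p h (j - 1) ∨ b = pqv n t r r' p h (j + 1) :=
    fun j hj0 hjr' hjr _ => exG_adj_pqv_of_interior hr hrr' hj0 hjr' hjr
  have inj := pqv_injOn (t := t) hr hrr' p h
  rcases hkr.lt_or_gt with hkr | hrk
  · refine ncard_sreach_le_three_of_segment le l (pqv n t r r' p h) hk0 hkr
      (inj.mono fun j hj => hj.2.trans hrr'.le) (fun j hj0 hjr => nbr j hj0 (by omega) hjr.ne)
      ?_ ?_
    · rw [pqv_zero, e]; exact hZY _ _
    · rw [pqv_r hr, e]; exact hXY _ _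
  · refine ncard_sreach_le_three_of_segment le l (pqv n t r r' p h) hrk hkr'
      (inj.mono fun j hj => hj.2) (fun j hrj hjr' => nbr j (by omega) hjr' hrj.ne') ?_ ?_
    · rw [pqv_r hr, e]; exact hXY _ _
    · rw [pqv_r' hrr', e]; exact hZY _ _

include hXZ hXY in
theorem sreach_xV_subset (hr : 1 ≤ r) (hrr' : r < r') (p : Idx n) :
    sreach (ExG n t r r') le r' (xV n t r r' p) ⊆
      xV n t r r' '' (incidentPairs p.1.1 ∪ incidentPairs p.1.2) := by
  rintro (a | q | w) ⟨hle, w', -, hlen, -⟩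
  · exact absurd hle (hXZ p a)
  · refine ⟨q, ?_, rfl⟩
    by_contra hq
    obtain ⟨⟨h11, h21⟩, h12, h22⟩ :
        (q.1.1 ≠ p.1.1 ∧ q.1.2 ≠ p.1.1) ∧ q.1.1 ≠ p.1.2 ∧ q.1.2 ≠ p.1.2 := by
      simpa [incidentPairs, not_or] using hq
    have hpot := w'.apply_le_apply_add_length (pot (t := t) p.1.1 p.1.2)
      fun _ _ => pot_le_pot_add_one hr hrr' p.2
    have hq' : q.1 ≠ (p.1.1, p.1.2) := fun he => h11 (congrArg Prod.fst he)
    have hp : pot (t := t) (r := r) (r' := r') p.1.1 p.1.2 (xV n t r r' p) = 0 := by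
      simp only [xV, pot, xPot, ite_true]
    have hfar : r' < pot p.1.1 p.1.2 (Sum.inr (Sum.inl q) : ExV n t r r') := by
      simp only [pot, xPot, zPot, if_neg hq', h11, h12, h21, h22, if_false]
      omega
    omega
  · exact absurd hle (hXY p w)

include hXZ hZY in
theorem ncard_sreach_zV_le (hr : 1 ≤ r) (hrr' : r < r') (l : ℕ) (i : Fin n) (h : Fin t) :
    (sreach (ExG n t r r') le l (zV n t r r' i h)).ncard ≤ 2 * (n - 1) + 1 :=
  calc _ ≤ (insert (zV n t r r' i h) (xV n t r r' '' incidentPairs i)).ncard :=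
        Set.ncard_le_ncard (sreach_zV_subset le hXZ hZY hr hrr' l i h)
    _ ≤ (incidentPairs i).ncard + 1 :=
        (Set.ncard_insert_le _ _).trans (Nat.add_le_add_right Set.ncard_image_le 1)
    _ ≤ 2 * (n - 1) + 1 := Nat.add_le_add_right (ncard_incidentPairs_le i) 1

include hXZ hXY in
theorem ncard_sreach_xV_le (hr : 1 ≤ r) (hrr' : r < r') (p : Idx n) :
    (sreach (ExG n t r r') le r' (xV n t r r' p)).ncard ≤ 4 * n - 6 :=
  calc _ ≤ (xV n t r r' '' (incidentPairs p.1.1 ∪ incidentPairs p.1.2)).ncard :=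
        Set.ncard_le_ncard (sreach_xV_subset le hXZ hXY hr hrr' p)
    _ ≤ (incidentPairs p.1.1 ∪ incidentPairs p.1.2).ncard := Set.ncard_image_le
    _ ≤ 4 * n - 6 := ncard_incidentPairs_union_le p.2

end StrongReach

/-- Claim 2 of Example 1: if `X <_σ Z <_σ Y` then
`scol_{r'}(G, σ) ≤ 4n - 6`. -/
theorem example1_claim2 (ht : 4 ≤ t) (htn : t ≤ n) (hr : 1 ≤ r) (hrr' : r < r')
    (σ : LinearOrder (ExV n t r r'))
    (hXZ : ∀ (p : Idx n) (a : Fin n × Fin t), σ.lt (xV n t r r' p) (Sum.inl a))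
    (hZY : ∀ (a : Fin n × Fin t) (w : (Idx n × Fin t × Fin (r - 1)) ⊕ (Idx n × Fin t × Fin (r' - r - 1))),
      σ.lt (Sum.inl a) (Sum.inr (Sum.inr w))) :
    scolOn (ExG n t r r') σ.le r' ≤ 4 * n - 6 := by
  have not_le : ∀ {a b : ExV n t r r'}, σ.lt a b → ¬ σ.le b a :=
    fun h => ((σ.lt_iff_le_not_ge _ _).1 h).2
  have hXZ' : ∀ p a, ¬ σ.le (Sum.inl a) (xV n t r r' p) := fun p a => not_le (hXZ p a)
  have hZY' : ∀ a w, ¬ σ.le (Sum.inr (Sum.inr w)) (Sum.inl a) := fun a w => not_le (hZY a w)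
  have hXY' : ∀ p w, ¬ σ.le (Sum.inr (Sum.inr w)) (xV n t r r' p) := fun p w hle =>
    hZY' (p.1.1, ⟨0, by omega⟩) w
      (σ.le_trans _ _ _ hle ((σ.lt_iff_le_not_ge _ _).1 (hXZ p _)).1)
  have : Std.Antisymm σ.le := ⟨σ.le_antisymm⟩
  refine Finset.sup_le fun x _ => ?_
  rw [Nat.card_coe_set_eq]
  rcases x with ⟨i, h⟩ | p | ⟨p, h, c⟩ | ⟨p, h, c⟩
  · have := ncard_sreach_zV_le σ.le hXZ' hZY' hr hrr' r' i h
    exact this.trans (by omega)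
  · exact ncard_sreach_xV_le σ.le hXZ' hXY' hr hrr' p
  · have := ncard_sreach_pqv_le_three σ.le hZY' hXY' hr hrr' r' (p := p) (h := h)
      (k := c + 1) (by omega) (by omega) (by omega)
    exact (pIn_eq_pqv (r' := r') ▸ this).trans (by omega)
  · have := ncard_sreach_pqv_le_three σ.le hZY' hXY' hr hrr' r' (p := p) (h := h)
      (k := r + c + 1) (by omega) (by omega) (by omega)
    exact (qIn_eq_pqv ▸ this).trans (by omega)
end
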